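/- Let D ∈ E^k with embedding dimension 2 and k ≥ 4, let i < j, and suppose for some ε ≠ 0 with |ε| sufficiently small, D + ε E_{ij} ∈ E^k with embedding dimension at most 2. Then the centered configuration matrix P of D (PPᵀ = K†(D)) has all rows p_s, s ∉ {i, j}, equal to a single common point p ∈ ℝ²; consequently D_{st} = 0 for all s, t ∉ {i, j}. -/

import Mathlib

/-!
Write `K = K†(D)` and `M = K†(E_ij)`, so that `K†(D + ε E_ij) = K + ε M`. Since `K + ε M` and
`K - ε M` are both positive semidefinite, `vᵀ M v = 0` for every `v ∈ ker K`, and then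
`(K + ε M) v = 0` gives `M v = 0`: thus `ker K ⊆ ker M`. For a third index `s`, `ker M` is the
set of `v` whose centered coordinates `(J v)_i`, `(J v)_j` vanish, a subspace of codimension `2`,
like `ker K`; hence the kernels coincide. Every `e_s - e_t` with `s, t ∉ {i, j}` lies in `ker M`,
so `K (e_s - e_t) = 0`, which says both that `p_s = p_t` and that
`D_st = (e_s - e_t)ᵀ K (e_s - e_t) = 0`.
-/

open Matrix BigOperators

noncomputable section

def unitMat {n : ℕ} (i j : Fin n) : Matrix (Fin n) (Fin n) ℝ :=
  Matrix.single i j 1 + Matrix.single j i 1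

def Jmat (ι : Type*) [Fintype ι] [DecidableEq ι] : Matrix ι ι ℝ :=
  (1 : Matrix ι ι ℝ) - (Fintype.card ι : ℝ)⁻¹ • Matrix.of (fun _ _ => (1 : ℝ))

def cKdag {ι : Type*} [Fintype ι] [DecidableEq ι] (D : Matrix ι ι ℝ) : Matrix ι ι ℝ :=
  (-(1 / 2 : ℝ)) • (Jmat ι * D * Jmat ι)

def IsEDMmat {ι : Type*} [Fintype ι] [DecidableEq ι] (D : Matrix ι ι ℝ) : Prop :=
  D.IsSymm ∧ (∀ i, D i i = 0) ∧ (cKdag D).PosSemidef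

section Centering

variable {ι : Type*} [Fintype ι] [DecidableEq ι]

lemma Jmat_mulVec (v : ι → ℝ) :
    Jmat ι *ᵥ v = fun a => v a - (∑ b, v b) / Fintype.card ι := by
  funext a
  simp [Jmat, mulVec, dotProduct, Matrix.one_apply, sub_mul, Finset.sum_sub_distrib,
    Finset.mul_sum, div_eq_inv_mul]

lemma Jmat_mulVec_of_sum_eq_zero {v : ι → ℝ} (hv : ∑ b, v b = 0) : Jmat ι *ᵥ v = v := by
  simp [Jmat_mulVec, hv]

lemma dotProduct_Jmat_mulVec_of_sum_eq_zero {v : ι → ℝ} (hv : ∑ b, v b = 0) (w : ι → ℝ) :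
    v ⬝ᵥ Jmat ι *ᵥ w = v ⬝ᵥ w := by
  rw [dotProduct_mulVec, ← mulVec_transpose, show (Jmat ι)ᵀ = Jmat ι by
    ext a b; simp [Jmat, Matrix.one_apply, eq_comm], Jmat_mulVec_of_sum_eq_zero hv]

lemma cKdag_add_smul (A B : Matrix ι ι ℝ) (c : ℝ) :
    cKdag (A + c • B) = cKdag A + c • cKdag B := by
  simp only [cKdag, Matrix.mul_add, Matrix.add_mul, Matrix.mul_smul, Matrix.smul_mul,
    smul_add, smul_comm c]

lemma cKdag_mulVec (A : Matrix ι ι ℝ) (v : ι → ℝ) :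
    cKdag A *ᵥ v = (-(1 / 2 : ℝ)) • (Jmat ι *ᵥ (A *ᵥ (Jmat ι *ᵥ v))) := by
  rw [cKdag, smul_mulVec, mulVec_mulVec, mulVec_mulVec, Matrix.mul_assoc]

lemma dotProduct_cKdag_mulVec_of_sum_eq_zero (A : Matrix ι ι ℝ) {v : ι → ℝ}
    (hv : ∑ b, v b = 0) : v ⬝ᵥ cKdag A *ᵥ v = -(1 / 2) * (v ⬝ᵥ A *ᵥ v) := by
  rw [cKdag_mulVec, dotProduct_smul, dotProduct_Jmat_mulVec_of_sum_eq_zero hv,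
    Jmat_mulVec_of_sum_eq_zero hv, smul_eq_mul]

lemma IsEDMmat.apply_eq_dotProduct_cKdag {D : Matrix ι ι ℝ} (hD : IsEDMmat D) (s t : ι) :
    D s t = (Pi.single s 1 - Pi.single t 1) ⬝ᵥ cKdag D *ᵥ (Pi.single s 1 - Pi.single t 1) := by
  rw [dotProduct_cKdag_mulVec_of_sum_eq_zero D (by simp [Finset.sum_sub_distrib])]
  simp [mulVec_sub, sub_dotProduct, dotProduct_sub, hD.2.1, hD.1.apply t s]
  ring

end Centering

lemma Matrix.ker_mulVecLin_le_of_posSemidef_add_sub {ι : Type*} [Fintype ι]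
    {A B : Matrix ι ι ℝ} {c : ℝ} (hc : c ≠ 0) (hplus : (A + c • B).PosSemidef)
    (hminus : (A - c • B).PosSemidef) :
    LinearMap.ker A.mulVecLin ≤ LinearMap.ker B.mulVecLin := by
  intro v hv
  simp only [LinearMap.mem_ker, mulVecLin_apply] at hv ⊢
  have hquad : ∀ C : Matrix ι ι ℝ, v ⬝ᵥ (A + C) *ᵥ v = v ⬝ᵥ C *ᵥ v := fun C => by
    rw [add_mulVec, hv, zero_add]
  have hplus' := hplus.dotProduct_mulVec_nonneg v
  have hminus' := hminus.dotProduct_mulVec_nonneg v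
  simp only [star_trivial, sub_eq_add_neg, ← neg_smul, hquad, smul_mulVec, dotProduct_smul,
    smul_eq_mul] at hplus' hminus'
  have hzero : (A + c • B) *ᵥ v = 0 := by
    rw [← hplus.dotProduct_mulVec_zero_iff, star_trivial, hquad, smul_mulVec, dotProduct_smul,
      smul_eq_mul]
    nlinarith
  rwa [add_mulVec, hv, zero_add, smul_mulVec, smul_eq_zero, or_iff_right hc] at hzero

lemma Matrix.rank_add_finrank_ker_mulVecLin {m n K : Type*} [Fintype n] [Field K]
    (A : Matrix m n K) :
    A.rank + Module.finrank K (LinearMap.ker A.mulVecLin) = Fintype.card n := by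
  rw [rank, LinearMap.finrank_range_add_finrank_ker, Module.finrank_fintype_fun_eq_card]

lemma Matrix.ker_mulVecLin_eq_of_posSemidef_add_sub {ι : Type*} [Fintype ι]
    {A B : Matrix ι ι ℝ} {c : ℝ} (hc : c ≠ 0) (hplus : (A + c • B).PosSemidef)
    (hminus : (A - c • B).PosSemidef) (hrank : A.rank ≤ B.rank) :
    LinearMap.ker A.mulVecLin = LinearMap.ker B.mulVecLin := by
  refine Submodule.eq_of_le_of_finrank_le
    (ker_mulVecLin_le_of_posSemidef_add_sub hc hplus hminus) ?_
  have hA := A.rank_add_finrank_ker_mulVecLin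
  have hB := B.rank_add_finrank_ker_mulVecLin
  omega

lemma Matrix.row_eq_of_mul_transpose_mulVec_single_sub_single {m n : Type*} [Fintype m]
    [DecidableEq m] [Fintype n] (P : Matrix m n ℝ) {s t : m}
    (h : (P * Pᵀ) *ᵥ (Pi.single s 1 - Pi.single t 1) = 0) : P s = P t := by
  have h' : Pᵀ *ᵥ (Pi.single s 1 - Pi.single t 1) = 0 := by
    simpa only [LinearMap.mem_ker, mulVecLin_apply, transpose_transpose] using
      (ker_mulVecLin_transpose_mul_self Pᵀ).le h
  funext c
  simpa [mulVec_sub, sub_eq_zero] using congrFun h' c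

section CenteredPair

variable {ι : Type*} [Fintype ι] [DecidableEq ι]

lemma apply_eq_of_Jmat_mulVec_eq_zero {z : ι → ℝ} (hz : Jmat ι *ᵥ z = 0) (a b : ι) :
    z a = z b := by
  have h := congrFun hz
  simp only [Jmat_mulVec, Pi.zero_apply, sub_eq_zero] at h
  rw [h a, h b]

def centeredPair (i j : ι) : (ι → ℝ) →ₗ[ℝ] ℝ × ℝ :=
  (LinearMap.proj i).prod (LinearMap.proj j) ∘ₗ (Jmat ι).mulVecLin

lemma centeredPair_apply (i j : ι) (v : ι → ℝ) :
    centeredPair i j v = ((Jmat ι *ᵥ v) i, (Jmat ι *ᵥ v) j) :=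
  rfl

lemma centeredPair_surjective {i j s : ι} (hij : i ≠ j) (hsi : s ≠ i) (hsj : s ≠ j) :
    Function.Surjective (centeredPair i j) := by
  rintro ⟨a, b⟩
  refine ⟨Pi.single i a + Pi.single j b - Pi.single s (a + b), ?_⟩
  rw [centeredPair_apply, Jmat_mulVec_of_sum_eq_zero (by simp [Finset.sum_add_distrib,
    Finset.sum_sub_distrib])]
  simp [hij, hij.symm, hsi.symm, hsj.symm]

lemma finrank_ker_centeredPair {i j s : ι} (hij : i ≠ j) (hsi : s ≠ i) (hsj : s ≠ j) :
    Module.finrank ℝ (LinearMap.ker (centeredPair i j)) + 2 = Fintype.card ι := by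
  have h := LinearMap.finrank_range_add_finrank_ker (centeredPair i j)
  rw [LinearMap.range_eq_top.2 (centeredPair_surjective hij hsi hsj), finrank_top,
    Module.finrank_prod, Module.finrank_self, Module.finrank_fintype_fun_eq_card] at h
  omega

lemma single_sub_single_mem_ker_centeredPair {i j s t : ι} (hsi : s ≠ i) (hsj : s ≠ j)
    (hti : t ≠ i) (htj : t ≠ j) :
    Pi.single s 1 - Pi.single t 1 ∈ LinearMap.ker (centeredPair i j) := by
  rw [LinearMap.mem_ker, centeredPair_apply,
    Jmat_mulVec_of_sum_eq_zero (by simp [Finset.sum_sub_distrib])]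
  simp [hsi.symm, hsj.symm, hti.symm, htj.symm]

end CenteredPair

section UnitMat

variable {n : ℕ}

lemma unitMat_mulVec (i j : Fin n) (y : Fin n → ℝ) :
    unitMat i j *ᵥ y = Pi.single i (y j) + Pi.single j (y i) := by
  simp [unitMat, add_mulVec, single_mulVec, Pi.single]

lemma ker_cKdag_unitMat {i j s : Fin n} (hij : i ≠ j) (hsi : s ≠ i) (hsj : s ≠ j) :
    LinearMap.ker (cKdag (unitMat i j)).mulVecLin = LinearMap.ker (centeredPair i j) := by
  ext v
  simp only [LinearMap.mem_ker, mulVecLin_apply, cKdag_mulVec, smul_eq_zero, centeredPair_apply,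
    Prod.mk_eq_zero, unitMat_mulVec]
  constructor
  · rintro (h | h)
    · norm_num at h
    have hi := apply_eq_of_Jmat_mulVec_eq_zero h i s
    have hj := apply_eq_of_Jmat_mulVec_eq_zero h j s
    simp [hij, hij.symm, hsi, hsj] at hi hj
    exact ⟨hj, hi⟩
  · rintro ⟨hi, hj⟩
    simp [hi, hj]

lemma rank_cKdag_unitMat {i j s : Fin n} (hij : i ≠ j) (hsi : s ≠ i) (hsj : s ≠ j) :
    (cKdag (unitMat i j)).rank = 2 := by
  have hM := (cKdag (unitMat i j)).rank_add_finrank_ker_mulVecLin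
  have hpair := finrank_ker_centeredPair hij hsi hsj
  rw [ker_cKdag_unitMat hij hsi hsj] at hM
  omega

end UnitMat

/-- The `d = 2` case: if `D` has embedding dimension `2` and `D + ε E_{ij}`
stays an EDM of embedding dimension at most `2` for all sufficiently small
`ε ≠ 0`, then all points other than `i` and `j` coincide, so `D_{st} = 0` for
all `s, t ∉ {i, j}`. -/
theorem yielding_dim_two (k : ℕ) (hk : 4 ≤ k)
    (D : Matrix (Fin k) (Fin k) ℝ) (hD : IsEDMmat D)
    (hrank : (cKdag D).rank = 2)
    (i j : Fin k) (hij : i < j)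
    (hyield : ∃ δ > (0 : ℝ), ∀ ε : ℝ, ε ≠ 0 → |ε| < δ →
      IsEDMmat (D + ε • unitMat i j) ∧ (cKdag (D + ε • unitMat i j)).rank ≤ 2) :
    (∀ P : Matrix (Fin k) (Fin 2) ℝ, P * Pᵀ = cKdag D →
      ∃ p : Fin 2 → ℝ, ∀ s : Fin k, s ≠ i → s ≠ j → (fun t => P s t) = p) ∧
    (∀ s t : Fin k, s ≠ i → s ≠ j → t ≠ i → t ≠ j → D s t = 0) := by
  obtain ⟨δ, hδ, hyield⟩ := hyield
  obtain ⟨s₀, hs₀i, hs₀j⟩ : ∃ s₀ : Fin k, s₀ ≠ i ∧ s₀ ≠ j :=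
    ENat.exists_ne_ne_of_three_le (by simp; omega) i j
  have hpsd : ∀ ε : ℝ, ε ≠ 0 → |ε| < δ → (cKdag D + ε • cKdag (unitMat i j)).PosSemidef :=
    fun ε hε hεδ => by simpa only [cKdag_add_smul] using (hyield ε hε hεδ).1.2.2
  have hε : |δ / 2| < δ := by rw [abs_of_pos (half_pos hδ)]; linarith
  have hker : LinearMap.ker (cKdag D).mulVecLin = LinearMap.ker (centeredPair i j) := by
    rw [← ker_cKdag_unitMat hij.ne hs₀i hs₀j]
    refine ker_mulVecLin_eq_of_posSemidef_add_sub (half_pos hδ).ne'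
      (hpsd _ (half_pos hδ).ne' hε) ?_ (by rw [hrank, rank_cKdag_unitMat hij.ne hs₀i hs₀j])
    simpa only [sub_eq_add_neg, ← neg_smul] using
      hpsd (-(δ / 2)) (neg_ne_zero.2 (half_pos hδ).ne') (by rwa [abs_neg])
  have hdiff : ∀ s t, s ≠ i → s ≠ j → t ≠ i → t ≠ j →
      cKdag D *ᵥ (Pi.single s 1 - Pi.single t 1) = 0 := fun s t hsi hsj hti htj => by
    have hmem := single_sub_single_mem_ker_centeredPair hsi hsj hti htj
    rwa [← hker, LinearMap.mem_ker, mulVecLin_apply] at hmem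
  refine ⟨fun P hP => ⟨P s₀, fun s hsi hsj => ?_⟩, fun s t hsi hsj hti htj => ?_⟩
  · exact P.row_eq_of_mul_transpose_mulVec_single_sub_single (hP ▸ hdiff s s₀ hsi hsj hs₀i hs₀j)
  · rw [hD.apply_eq_dotProduct_cKdag, hdiff s t hsi hsj hti htj, dotProduct_zero]
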